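/- arXiv:1904.08780 — 4 statements merged into one kernel-verified Lean document; each statement's English description precedes it below -/
import Mathlib

section
/- Let (Ω̄, 𝒢) be a measurable space, 𝒬 a nonempty convex set of probability measures on (Ω̄, 𝒢), and Y : Ω̄ → ℝ^d a 𝒢-measurable random variable. Then the one-period no-arbitrage condition NA(𝒬) holds if and only if 0 ∈ Ri(Conv(D)), where D is the quasi-sure support of Y. -/
open MeasureTheory Set
open scoped ENNReal

/-- The quasi-sure support of `Y` under the family of priors `𝒬`:
the intersection of all closed sets `A ⊆ ℝ^d` with `P(Y ∈ A) = 1` for every `P ∈ 𝒬`. -/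
def qsSupport {Ω : Type*} [MeasurableSpace Ω] {d : ℕ} (𝒬 : Set (Measure Ω))
    (Y : Ω → EuclideanSpace ℝ (Fin d)) : Set (EuclideanSpace ℝ (Fin d)) :=
  ⋂₀ {A : Set (EuclideanSpace ℝ (Fin d)) | IsClosed A ∧ ∀ P ∈ 𝒬, P (Y ⁻¹' A) = 1}

/-- One-period no-arbitrage condition `NA(𝒬)` :
`h·Y ≥ 0` 𝒬-q.s. implies `h·Y = 0` 𝒬-q.s. -/
def NAcond {Ω : Type*} [MeasurableSpace Ω] {d : ℕ} (𝒬 : Set (Measure Ω))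
    (Y : Ω → EuclideanSpace ℝ (Fin d)) : Prop :=
  ∀ h : EuclideanSpace ℝ (Fin d),
    (∀ P ∈ 𝒬, ∀ᵐ ω ∂P, 0 ≤ (inner ℝ h (Y ω) : ℝ)) →
    ∀ P ∈ 𝒬, ∀ᵐ ω ∂P, (inner ℝ h (Y ω) : ℝ) = 0

/-- Convexity of a set of measures. -/
def ConvexMeasSet {Ω : Type*} [MeasurableSpace Ω] (𝒬 : Set (Measure Ω)) : Prop :=
  ∀ P ∈ 𝒬, ∀ Q ∈ 𝒬, ∀ t : ℝ≥0∞, t ≤ 1 → t • P + (1 - t) • Q ∈ 𝒬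

/-!
A closed condition on `Y` holds `𝒬`-quasi-surely iff it holds on the quasi-sure support `D`,
because `D` is itself of full measure for every `P ∈ 𝒬` (by Lindelöf, its complement is a
countable union of null sets). Hence `NA(𝒬)` says that every linear functional which is
nonnegative on `D` vanishes on `D`. If `0 ∈ Ri(Conv D)`, then for each `y ∈ D` some `-t • y` with
`t > 0` lies in `Conv D`, which forces `f y = 0`. Otherwise a separating functional is
nonnegative on `Conv D` without vanishing on it, hence without vanishing on `D`.
-/

lemma AffineSubspace.mem_direction_iff_mem_of_zero_mem {𝕜 E : Type*} [Ring 𝕜] [AddCommGroup E]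
    [Module 𝕜 E] {s : AffineSubspace 𝕜 E} (h0 : (0 : E) ∈ s) {x : E} :
    x ∈ s.direction ↔ x ∈ s := by
  simpa using AffineSubspace.vsub_right_mem_direction_iff_mem h0 x

lemma mem_interior_preimage_val_iff {α : Type*} [PseudoMetricSpace α] {S C : Set α} {p : S} :
    p ∈ interior (((↑) : S → α) ⁻¹' C) ↔ ∃ ε > 0, ∀ x ∈ S, dist x p < ε → x ∈ C := by
  rw [mem_interior_iff_mem_nhds, Metric.mem_nhds_iff]
  exact ⟨fun ⟨ε, hε, h⟩ => ⟨ε, hε, fun x hx hd => h (a := ⟨x, hx⟩) hd⟩,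
    fun ⟨ε, hε, h⟩ => ⟨ε, hε, fun x hx => h x x.2 hx⟩⟩

section NormedSpace

variable {E : Type*} [NormedAddCommGroup E] [NormedSpace ℝ E] {C : Set E}

lemma mem_intrinsicInterior_iff_dist {p : E} :
    p ∈ intrinsicInterior ℝ C ↔
      p ∈ affineSpan ℝ C ∧ ∃ ε > 0, ∀ x ∈ affineSpan ℝ C, dist x p < ε → x ∈ C := by
  rw [mem_intrinsicInterior]
  constructor
  · rintro ⟨y, hy, rfl⟩
    exact ⟨y.2, mem_interior_preimage_val_iff.1 hy⟩
  · rintro ⟨hp, hball⟩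
    exact ⟨⟨p, hp⟩, mem_interior_preimage_val_iff.2 hball, rfl⟩

lemma mem_interior_preimage_direction_iff (h0 : (0 : E) ∈ affineSpan ℝ C)
    {p : (affineSpan ℝ C).direction} :
    p ∈ interior (((↑) : (affineSpan ℝ C).direction → E) ⁻¹' C) ↔
      (p : E) ∈ intrinsicInterior ℝ C := by
  have hp := (AffineSubspace.mem_direction_iff_mem_of_zero_mem h0).1 p.2
  have := mem_interior_preimage_val_iff (S := ((affineSpan ℝ C).direction : Set E))
    (C := C) (p := p)
  simp only [SetLike.mem_coe, AffineSubspace.mem_direction_iff_mem_of_zero_mem h0] at this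
  rw [mem_intrinsicInterior_iff_dist]
  exact this.trans (and_iff_right hp).symm

lemma exists_neg_smul_mem_of_zero_mem_intrinsicInterior (h0 : (0 : E) ∈ intrinsicInterior ℝ C)
    {y : E} (hy : y ∈ C) : ∃ t > (0 : ℝ), (-t) • y ∈ C := by
  obtain ⟨h0span, ε, hε, hball⟩ := mem_intrinsicInterior_iff_dist.1 h0
  have hdir : y ∈ (affineSpan ℝ C).direction :=
    (AffineSubspace.mem_direction_iff_mem_of_zero_mem h0span).2 (subset_affineSpan ℝ C hy)
  have hsmall : ∀ᶠ t in nhdsWithin (0 : ℝ) (Ioi 0), dist ((-t) • y) 0 < ε := by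
    have : Continuous fun t : ℝ => (-t) • y := by fun_prop
    exact (this.tendsto' 0 0 (by simp)).mono_left nhdsWithin_le_nhds |>.eventually
      (Metric.ball_mem_nhds 0 hε)
  obtain ⟨t, hdist, ht⟩ := (hsmall.and self_mem_nhdsWithin).exists
  exact ⟨t, ht, hball _ ((AffineSubspace.mem_direction_iff_mem_of_zero_mem h0span).1
    ((affineSpan ℝ C).direction.smul_mem _ hdir)) hdist⟩

lemma eq_zero_of_nonneg_of_zero_mem_intrinsicInterior (h0 : (0 : E) ∈ intrinsicInterior ℝ C)
    (f : E →ₗ[ℝ] ℝ) (hf : ∀ x ∈ C, 0 ≤ f x) {x : E} (hx : x ∈ C) : f x = 0 := by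
  obtain ⟨t, ht, htx⟩ := exists_neg_smul_mem_of_zero_mem_intrinsicInterior h0 hx
  have := hf _ htx
  rw [map_smul, smul_eq_mul, neg_mul, neg_nonneg] at this
  exact le_antisymm (nonpos_of_mul_nonpos_right this ht) (hf x hx)

lemma Convex.exists_le_lt_of_notMem_interior (hC : Convex ℝ C) (hint : (interior C).Nonempty)
    {x : E} (hx : x ∉ interior C) :
    ∃ f : StrongDual ℝ E, (∀ y ∈ C, f y ≤ f x) ∧ ∃ y ∈ C, f y < f x := by
  obtain ⟨f, hf⟩ := geometric_hahn_banach_open_point hC.interior isOpen_interior hx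
  refine ⟨f, fun y hy => ?_, hint.imp fun y hy => ⟨interior_subset hy, hf y hy⟩⟩
  have hclosure : C ⊆ closure (interior C) := by
    rw [hC.closure_interior_eq_closure_of_nonempty_interior hint]
    exact subset_closure
  exact closure_minimal (fun z hz => (hf z hz).le) (isClosed_le f.continuous continuous_const)
    (hclosure hy)

variable [FiniteDimensional ℝ E]

lemma exists_nonneg_pos_of_zero_notMem_intrinsicInterior (hC : Convex ℝ C) (hne : C.Nonempty)
    (h0 : (0 : E) ∉ intrinsicInterior ℝ C) :
    ∃ f : StrongDual ℝ E, (∀ x ∈ C, 0 ≤ f x) ∧ ∃ x ∈ C, 0 < f x := by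
  by_cases hcl : (0 : E) ∈ closure C
  -- Then the affine span of `C` is a linear subspace `V`, in which `C` has nonempty interior
  -- avoiding `0`: separate there and extend the functional to `E` by Hahn–Banach.
  · have h0span : (0 : E) ∈ affineSpan ℝ C :=
      intrinsicClosure_subset_affineSpan (by rwa [intrinsicClosure_eq_closure])
    set V := (affineSpan ℝ C).direction
    have hCV : ∀ x ∈ C, x ∈ V := fun x hx =>
      (AffineSubspace.mem_direction_iff_mem_of_zero_mem h0span).2 (subset_affineSpan ℝ C hx)
    obtain ⟨z, hz⟩ := hne.intrinsicInterior hC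
    have hzV : z ∈ V := hCV z (intrinsicInterior_subset hz)
    obtain ⟨g, hg, y, hy, hgy⟩ := (hC.linear_preimage V.subtype).exists_le_lt_of_notMem_interior
      ⟨⟨z, hzV⟩, (mem_interior_preimage_direction_iff h0span).2 hz⟩
      (x := 0) fun h => h0 ((mem_interior_preimage_direction_iff h0span).1 h)
    obtain ⟨f, hf, -⟩ := exists_extension_norm_eq V (-g)
    refine ⟨f, fun x hx => ?_, y, hy, ?_⟩
    · simpa [hf ⟨x, hCV x hx⟩] using hg ⟨x, hCV x hx⟩ hx
    · simpa [hf y] using hgy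
  · obtain ⟨f, u, hfu, hf⟩ := geometric_hahn_banach_point_closed hC.closure isClosed_closure hcl
    rw [map_zero] at hfu
    have hpos : ∀ x ∈ C, 0 < f x := fun x hx => hfu.trans (hf x (subset_closure hx))
    exact ⟨f, fun x hx => (hpos x hx).le, hne.imp fun x hx => ⟨hx, hpos x hx⟩⟩

theorem zero_mem_intrinsicInterior_convexHull_iff {D : Set E} (hD : D.Nonempty) :
    (0 : E) ∈ intrinsicInterior ℝ (convexHull ℝ D) ↔
      ∀ f : StrongDual ℝ E, (∀ y ∈ D, 0 ≤ f y) → ∀ y ∈ D, f y = 0 := by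
  constructor
  · intro h0 f hf y hy
    have hfC : ∀ x ∈ convexHull ℝ D, 0 ≤ f x :=
      convexHull_min hf (convex_halfSpace_ge f.toLinearMap.isLinear 0)
    exact eq_zero_of_nonneg_of_zero_mem_intrinsicInterior h0 f hfC (subset_convexHull ℝ D hy)
  · intro hNA
    by_contra h0
    obtain ⟨f, hf, x, hx, hfx⟩ := exists_nonneg_pos_of_zero_notMem_intrinsicInterior
      (convex_convexHull ℝ D) hD.convexHull h0
    have hfD : D ⊆ LinearMap.ker (f : E →ₗ[ℝ] ℝ) :=
      hNA f fun y hy => hf y (subset_convexHull ℝ D hy)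
    have hfC := convexHull_min hfD (LinearMap.ker (f : E →ₗ[ℝ] ℝ)).convex hx
    exact hfx.ne' hfC

end NormedSpace

section QuasiSureSupport

variable {Ω : Type*} [MeasurableSpace Ω] {d : ℕ} {𝒬 : Set (Measure Ω)}
  {Y : Ω → EuclideanSpace ℝ (Fin d)}

lemma ae_mem_qsSupport (h𝒬prob : ∀ P ∈ 𝒬, IsProbabilityMeasure P) (hY : Measurable Y)
    {P : Measure Ω} (hP : P ∈ 𝒬) : ∀ᵐ ω ∂P, Y ω ∈ qsSupport 𝒬 Y := by
  have := h𝒬prob P hP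
  set S := {A : Set (EuclideanSpace ℝ (Fin d)) | IsClosed A ∧ ∀ P ∈ 𝒬, P (Y ⁻¹' A) = 1}
  obtain ⟨T, hTS, hTc, hTU⟩ := TopologicalSpace.isOpen_biUnion_countable S compl
    fun A hA => hA.1.isOpen_compl
  have hsupp : qsSupport 𝒬 Y = ⋂ A ∈ T, A := by
    rw [qsSupport, sInter_eq_biInter]
    apply compl_injective
    simp only [compl_iInter]
    exact hTU.symm
  simp only [hsupp, mem_iInter₂]
  exact (eventually_countable_ball hTc).2 fun A hA =>
    (mem_ae_iff_prob_eq_one (hY (hTS hA).1.measurableSet)).2 ((hTS hA).2 P hP)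

lemma forall_ae_mem_iff_qsSupport_subset (h𝒬prob : ∀ P ∈ 𝒬, IsProbabilityMeasure P)
    (hY : Measurable Y) {A : Set (EuclideanSpace ℝ (Fin d))} (hA : IsClosed A) :
    (∀ P ∈ 𝒬, ∀ᵐ ω ∂P, Y ω ∈ A) ↔ qsSupport 𝒬 Y ⊆ A := by
  refine ⟨fun h => sInter_subset_of_mem ⟨hA, fun P hP => ?_⟩, fun hsub P hP => ?_⟩
  · have := h𝒬prob P hP
    exact (mem_ae_iff_prob_eq_one (hY hA.measurableSet)).1 (h P hP)
  · exact (ae_mem_qsSupport h𝒬prob hY hP).mono fun ω hω => hsub hω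

lemma qsSupport_nonempty (h𝒬ne : 𝒬.Nonempty) (h𝒬prob : ∀ P ∈ 𝒬, IsProbabilityMeasure P)
    (hY : Measurable Y) : (qsSupport 𝒬 Y).Nonempty := by
  obtain ⟨P, hP⟩ := h𝒬ne
  have := h𝒬prob P hP
  obtain ⟨ω, hω⟩ := (ae_mem_qsSupport h𝒬prob hY hP).exists
  exact ⟨Y ω, hω⟩

lemma NAcond_iff_forall_dual (h𝒬prob : ∀ P ∈ 𝒬, IsProbabilityMeasure P) (hY : Measurable Y) :
    NAcond 𝒬 Y ↔ ∀ f : StrongDual ℝ (EuclideanSpace ℝ (Fin d)),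
      (∀ y ∈ qsSupport 𝒬 Y, 0 ≤ f y) → ∀ y ∈ qsSupport 𝒬 Y, f y = 0 := by
  rw [NAcond, (InnerProductSpace.toDual ℝ (EuclideanSpace ℝ (Fin d))).surjective.forall]
  refine forall_congr' fun h => imp_congr ?_ ?_ <;>
    simp only [InnerProductSpace.toDual_apply_apply]
  · exact forall_ae_mem_iff_qsSupport_subset h𝒬prob hY (A := {y | 0 ≤ inner ℝ h y})
      (isClosed_le continuous_const (continuous_const.inner continuous_id))
  · exact forall_ae_mem_iff_qsSupport_subset h𝒬prob hY (A := {y | inner ℝ h y = 0})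
      (isClosed_eq (continuous_const.inner continuous_id) continuous_const)

end QuasiSureSupport

theorem na_iff_zero_mem_ri_conv_qsSupport_general
    {Ω : Type*} [MeasurableSpace Ω] {d : ℕ}
    (𝒬 : Set (Measure Ω)) (h𝒬ne : 𝒬.Nonempty)
    (h𝒬prob : ∀ P ∈ 𝒬, IsProbabilityMeasure P)
    (Y : Ω → EuclideanSpace ℝ (Fin d)) (hY : Measurable Y) :
    NAcond 𝒬 Y ↔
      (0 : EuclideanSpace ℝ (Fin d)) ∈
        intrinsicInterior ℝ (convexHull ℝ (qsSupport 𝒬 Y)) := by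
  rw [NAcond_iff_forall_dual h𝒬prob hY,
    zero_mem_intrinsicInterior_convexHull_iff (qsSupport_nonempty h𝒬ne h𝒬prob hY)]

/-- NA(𝒬) holds iff `0` lies in the relative interior of the convex hull
of the quasi-sure support `D`. -/
theorem na_iff_zero_mem_ri_conv_qsSupport
    {Ω : Type*} [MeasurableSpace Ω] {d : ℕ}
    (𝒬 : Set (Measure Ω)) (h𝒬ne : 𝒬.Nonempty)
    (h𝒬prob : ∀ P ∈ 𝒬, IsProbabilityMeasure P)
    (h𝒬conv : ConvexMeasSet 𝒬)
    (Y : Ω → EuclideanSpace ℝ (Fin d)) (hY : Measurable Y) :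
    NAcond 𝒬 Y ↔
      (0 : EuclideanSpace ℝ (Fin d)) ∈
        intrinsicInterior ℝ (convexHull ℝ (qsSupport 𝒬 Y)) :=
  na_iff_zero_mem_ri_conv_qsSupport_general 𝒬 h𝒬ne h𝒬prob Y hY
end

section
/- Let (Ω̄, 𝒢) be a measurable space, 𝒬 a nonempty convex set of probability measures on (Ω̄, 𝒢), and Y : Ω̄ → ℝ^d a 𝒢-measurable random variable. Suppose 0 ∈ Ri(Conv(D)) and let ε > 0 be such that B(0,ε) ∩ Aff(D) ⊆ Conv(D). Then there exists κ ∈ (0,1] such that for every h ∈ Aff(D) with h ≠ 0 there exists P_h ∈ 𝒬 satisfying P_h(h·Y < −(ε/2)|h|) ≥ κ; that is, the quantitative no-arbitrage condition holds with β = ε/2. -/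
open MeasureTheory Set
open scoped ENNReal

open Filter Topology Metric
open scoped RealInnerProductSpace

/-!
For a unit vector `u ∈ Aff(D)` and `β < γ < ε`, the point `-γ • u` lies in `Conv(D)`, so some point
of the support `D` lies in the open half-space `{x | ⟪u, x⟫ < -β}`, and an open set meeting the
quasi-sure support is charged by some prior. Truncating `Y` to a bounded set makes this charge
stable under small perturbations of `u`, compactness of the unit sphere of `Aff(D)` turns these
local lower bounds into a uniform one, and homogeneity in `h` does the rest.
-/

theorem IsCompact.exists_pos_forall_of_eventually {X : Type*} [TopologicalSpace X] {K : Set X}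
    (hK : IsCompact K) {p : ℝ → X → Prop} (hp : ∀ ⦃c c'⦄ x, c ≤ c' → p c' x → p c x)
    (hloc : ∀ x ∈ K, ∃ c > 0, ∀ᶠ y in 𝓝 x, p c y) : ∃ c > 0, ∀ x ∈ K, p c x := by
  refine hK.induction_on (p := fun s => ∃ c > 0, ∀ x ∈ s, p c x) ⟨1, one_pos, by simp⟩ ?_ ?_ ?_
  · rintro s t hst ⟨c, hc, ht⟩
    exact ⟨c, hc, fun x hx => ht x (hst hx)⟩
  · rintro s t ⟨c, hc, hs⟩ ⟨c', hc', ht⟩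
    refine ⟨min c c', lt_min hc hc', ?_⟩
    rintro x (hx | hx)
    · exact hp x (min_le_left _ _) (hs x hx)
    · exact hp x (min_le_right _ _) (ht x hx)
  · intro x hx
    obtain ⟨c, hc, hev⟩ := hloc x hx
    exact ⟨_, mem_nhdsWithin_of_mem_nhds hev, c, hc, fun y hy => hy⟩

theorem AffineSubspace.smul_mem_of_zero_mem {k V : Type*} [Ring k] [AddCommGroup V] [Module k V]
    {s : AffineSubspace k V} (h0 : 0 ∈ s) (r : k) {x : V} (hx : x ∈ s) : r • x ∈ s := by
  simpa [AffineMap.lineMap_apply_module] using AffineMap.lineMap_mem r h0 hx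

theorem exists_measure_inter_norm_le_pos {Ω E : Type*} [MeasurableSpace Ω]
    [SeminormedAddCommGroup E] {μ : Measure Ω} {s : Set Ω} (hs : 0 < μ s) (Y : Ω → E) :
    ∃ R > 0, 0 < μ (s ∩ {ω | ‖Y ω‖ ≤ R}) := by
  have hcover : s = ⋃ n : ℕ, s ∩ {ω | ‖Y ω‖ ≤ n + 1} := by
    refine Subset.antisymm (fun ω hω => ?_) (iUnion_subset fun _ => inter_subset_left)
    obtain ⟨n, hn⟩ := exists_nat_ge ‖Y ω‖
    exact mem_iUnion.2 ⟨n, hω, show ‖Y ω‖ ≤ n + 1 by linarith⟩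
  obtain ⟨n, hn⟩ := exists_measure_pos_of_not_measure_iUnion_null (hcover ▸ hs.ne')
  exact ⟨n + 1, by positivity, hn⟩

section QuasiSureSupport

variable {Ω : Type*} [MeasurableSpace Ω] {d : ℕ} {𝒬 : Set (Measure Ω)}
  {Y : Ω → EuclideanSpace ℝ (Fin d)}

theorem exists_measure_preimage_pos_of_mem_qsSupport
    (h𝒬prob : ∀ P ∈ 𝒬, IsProbabilityMeasure P) (hY : Measurable Y)
    {U : Set (EuclideanSpace ℝ (Fin d))} (hU : IsOpen U) {y : EuclideanSpace ℝ (Fin d)}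
    (hy : y ∈ qsSupport 𝒬 Y) (hyU : y ∈ U) : ∃ P ∈ 𝒬, 0 < P (Y ⁻¹' U) := by
  by_contra! hnull
  suffices hUc : ∀ P ∈ 𝒬, P (Y ⁻¹' Uᶜ) = 1 from
    sInter_subset_of_mem (S := {A | IsClosed A ∧ ∀ P ∈ 𝒬, P (Y ⁻¹' A) = 1})
      ⟨hU.isClosed_compl, hUc⟩ hy hyU
  intro P hP
  have := h𝒬prob P hP
  rw [preimage_compl, prob_compl_eq_one_iff (hY hU.measurableSet)]
  exact nonpos_iff_eq_zero.1 (hnull P hP)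

theorem exists_eventually_measure_inner_lt
    (h𝒬prob : ∀ P ∈ 𝒬, IsProbabilityMeasure P) (hY : Measurable Y)
    {h y : EuclideanSpace ℝ (Fin d)} (hy : y ∈ qsSupport 𝒬 Y) {β : ℝ} (hβ : ⟪h, y⟫ < -β) :
    ∃ c > 0, ∀ᶠ h' in 𝓝 h, ∃ P ∈ 𝒬, ENNReal.ofReal c ≤ P {ω | ⟪h', Y ω⟫ < -β} := by
  obtain ⟨η, hη, hyη⟩ : ∃ η > 0, ⟪h, y⟫ < -β - η := ⟨(-β - ⟪h, y⟫) / 2, by linarith, by linarith⟩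
  have hU : IsOpen {x : EuclideanSpace ℝ (Fin d) | ⟪h, x⟫ < -β - η} :=
    isOpen_lt (continuous_const.inner continuous_id) continuous_const
  obtain ⟨P, hP, hPU⟩ := exists_measure_preimage_pos_of_mem_qsSupport h𝒬prob hY hU hy hyη
  have := h𝒬prob P hP
  obtain ⟨R, hR, hPR⟩ := exists_measure_inter_norm_le_pos hPU Y
  refine ⟨_, ENNReal.toReal_pos hPR.ne' (measure_ne_top _ _), ?_⟩
  filter_upwards [ball_mem_nhds h (div_pos hη hR)] with h' hh'
  refine ⟨P, hP, (ENNReal.ofReal_toReal (measure_ne_top _ _)).trans_le (measure_mono ?_)⟩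
  rintro ω ⟨hωU, hωR⟩
  have hdist : ‖h' - h‖ ≤ η / R := (mem_ball_iff_norm.1 hh').le
  calc ⟪h', Y ω⟫ = ⟪h, Y ω⟫ + ⟪h' - h, Y ω⟫ := by rw [← inner_add_left, add_sub_cancel]
    _ ≤ ⟪h, Y ω⟫ + ‖h' - h‖ * ‖Y ω‖ := by gcongr; exact real_inner_le_norm _ _
    _ ≤ ⟪h, Y ω⟫ + η / R * R := by gcongr; exact hωR
    _ < -β := by rw [div_mul_cancel₀ _ hR.ne']; linarith [show ⟪h, Y ω⟫ < -β - η from hωU]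

end QuasiSureSupport

theorem exists_mem_inner_lt_of_ball_inter_affineSpan_subset {E : Type*} [NormedAddCommGroup E]
    [InnerProductSpace ℝ E] {D : Set E} {ε β : ℝ}
    (hball : ball 0 ε ∩ (affineSpan ℝ D : Set E) ⊆ convexHull ℝ D) (h0 : (0 : E) ∈ affineSpan ℝ D)
    (hβ : 0 ≤ β) (hβε : β < ε) {u : E} (hu : u ∈ affineSpan ℝ D) (hu1 : ‖u‖ = 1) :
    ∃ y ∈ D, ⟪u, y⟫ < -β := by
  obtain ⟨γ, hβγ, hγε⟩ := exists_between hβε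
  have hx : -γ • u ∈ convexHull ℝ D := by
    refine hball ⟨?_, AffineSubspace.smul_mem_of_zero_mem h0 _ hu⟩
    rw [mem_ball_zero_iff, norm_smul, hu1, mul_one, norm_neg, Real.norm_of_nonneg (hβ.trans hβγ.le)]
    exact hγε
  obtain ⟨y, hyD, hy⟩ :=
    ((innerₛₗ ℝ u).concaveOn convex_univ).exists_le_of_mem_convexHull (subset_univ _) hx
  refine ⟨y, hyD, hy.trans_lt ?_⟩
  simp only [innerₛₗ_apply_apply, real_inner_smul_right, real_inner_self_eq_norm_sq, hu1]
  linarith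

theorem exists_forall_measure_inner_lt_neg_mul_norm
    {Ω : Type*} [MeasurableSpace Ω] {d : ℕ} {𝒬 : Set (Measure Ω)}
    (h𝒬prob : ∀ P ∈ 𝒬, IsProbabilityMeasure P)
    {Y : Ω → EuclideanSpace ℝ (Fin d)} (hY : Measurable Y)
    (h0 : (0 : EuclideanSpace ℝ (Fin d)) ∈ affineSpan ℝ (qsSupport 𝒬 Y)) {ε β : ℝ}
    (hβ : 0 ≤ β) (hβε : β < ε)
    (hball : ball (0 : EuclideanSpace ℝ (Fin d)) ε ∩
        (affineSpan ℝ (qsSupport 𝒬 Y) : Set (EuclideanSpace ℝ (Fin d)))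
        ⊆ convexHull ℝ (qsSupport 𝒬 Y)) :
    ∃ κ > 0, ∀ h ∈ affineSpan ℝ (qsSupport 𝒬 Y), h ≠ 0 →
      ∃ P ∈ 𝒬, ENNReal.ofReal κ ≤ P {ω | ⟪h, Y ω⟫ < -β * ‖h‖} := by
  have hS : IsCompact
      (sphere (0 : EuclideanSpace ℝ (Fin d)) 1 ∩ (affineSpan ℝ (qsSupport 𝒬 Y) : Set _)) :=
    (isCompact_sphere 0 1).inter_right (AffineSubspace.closed_of_finiteDimensional _)
  obtain ⟨κ, hκ, hκS⟩ := hS.exists_pos_forall_of_eventually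
    (p := fun c u => ∃ P ∈ 𝒬, ENNReal.ofReal c ≤ P {ω | ⟪u, Y ω⟫ < -β})
    (fun _ _ _ hcc' ⟨P, hP, hPc'⟩ => ⟨P, hP, (ENNReal.ofReal_le_ofReal hcc').trans hPc'⟩)
    (fun u ⟨hu1, hu⟩ => by
      obtain ⟨y, hyD, hyu⟩ := exists_mem_inner_lt_of_ball_inter_affineSpan_subset hball h0 hβ
        hβε hu (mem_sphere_zero_iff_norm.1 hu1)
      exact exists_eventually_measure_inner_lt h𝒬prob hY hyD hyu)
  refine ⟨κ, hκ, fun h hh hh0 => ?_⟩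
  have hnorm : 0 < ‖h‖ := norm_pos_iff.2 hh0
  obtain ⟨P, hP, hPκ⟩ := hκS (‖h‖⁻¹ • h)
    ⟨by simp [norm_smul, hnorm.ne'], AffineSubspace.smul_mem_of_zero_mem h0 _ hh⟩
  refine ⟨P, hP, hPκ.trans_eq (congrArg P (ext fun ω => ?_))⟩
  simp only [mem_ofPred_eq, real_inner_smul_left, inv_mul_lt_iff₀ hnorm]
  rw [mul_comm]

theorem quantitative_with_beta_eq_eps_div_two_general
    {Ω : Type*} [MeasurableSpace Ω] {d : ℕ}
    (𝒬 : Set (Measure Ω))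
    (h𝒬prob : ∀ P ∈ 𝒬, IsProbabilityMeasure P)
    (Y : Ω → EuclideanSpace ℝ (Fin d)) (hY : Measurable Y)
    (h0 : (0 : EuclideanSpace ℝ (Fin d)) ∈
      intrinsicInterior ℝ (convexHull ℝ (qsSupport 𝒬 Y)))
    (ε : ℝ) (hε : 0 < ε)
    (hball : Metric.ball (0 : EuclideanSpace ℝ (Fin d)) ε ∩
        (affineSpan ℝ (qsSupport 𝒬 Y) : Set (EuclideanSpace ℝ (Fin d)))
        ⊆ convexHull ℝ (qsSupport 𝒬 Y)) :
    ∃ κ : ℝ, 0 < κ ∧ κ ≤ 1 ∧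
      ∀ h : EuclideanSpace ℝ (Fin d),
        h ∈ affineSpan ℝ (qsSupport 𝒬 Y) → h ≠ 0 →
        ∃ P ∈ 𝒬, ENNReal.ofReal κ ≤ P {ω | (inner ℝ h (Y ω) : ℝ) < -(ε / 2) * ‖h‖} := by
  have h0span : (0 : EuclideanSpace ℝ (Fin d)) ∈ affineSpan ℝ (qsSupport 𝒬 Y) :=
    convexHull_subset_affineSpan _ (intrinsicInterior_subset h0)
  obtain ⟨κ, hκ, hκh⟩ := exists_forall_measure_inner_lt_neg_mul_norm h𝒬prob hY h0span
    (half_pos hε).le (half_lt_self hε) hball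
  refine ⟨min κ 1, lt_min hκ one_pos, min_le_right _ _, fun h hh hh0 => ?_⟩
  obtain ⟨P, hP, hPκ⟩ := hκh h hh hh0
  exact ⟨P, hP, (ENNReal.ofReal_le_ofReal (min_le_left _ _)).trans hPκ⟩

/-- If `0 ∈ Ri(Conv(D))` and `B(0,ε) ∩ Aff(D) ⊆ Conv(D)`, then the quantitative
no-arbitrage condition holds with `β = ε/2`. -/
theorem quantitative_with_beta_eq_eps_div_two
    {Ω : Type*} [MeasurableSpace Ω] {d : ℕ}
    (𝒬 : Set (Measure Ω)) (h𝒬ne : 𝒬.Nonempty)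
    (h𝒬prob : ∀ P ∈ 𝒬, IsProbabilityMeasure P)
    (h𝒬conv : ConvexMeasSet 𝒬)
    (Y : Ω → EuclideanSpace ℝ (Fin d)) (hY : Measurable Y)
    (h0 : (0 : EuclideanSpace ℝ (Fin d)) ∈
      intrinsicInterior ℝ (convexHull ℝ (qsSupport 𝒬 Y)))
    (ε : ℝ) (hε : 0 < ε)
    (hball : Metric.ball (0 : EuclideanSpace ℝ (Fin d)) ε ∩
        (affineSpan ℝ (qsSupport 𝒬 Y) : Set (EuclideanSpace ℝ (Fin d)))
        ⊆ convexHull ℝ (qsSupport 𝒬 Y)) :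
    ∃ κ : ℝ, 0 < κ ∧ κ ≤ 1 ∧
      ∀ h : EuclideanSpace ℝ (Fin d),
        h ∈ affineSpan ℝ (qsSupport 𝒬 Y) → h ≠ 0 →
        ∃ P ∈ 𝒬, ENNReal.ofReal κ ≤ P {ω | (inner ℝ h (Y ω) : ℝ) < -(ε / 2) * ‖h‖} :=
  quantitative_with_beta_eq_eps_div_two_general 𝒬 h𝒬prob Y hY h0 ε hε hball
end

section
/- Let (Ω̄, 𝒢) be a measurable space, 𝒬 a nonempty convex set of probability measures on (Ω̄, 𝒢), and Y : Ω̄ → ℝ^d a 𝒢-measurable random variable. Assume the one-period no-arbitrage condition NA(𝒬) holds. Then for every h ∈ Aff(D) such that h·Y ≥ 0 𝒬-q.s., one has h = 0. -/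
/-! By NA(𝒬), `h·Y ≥ 0` q.s. upgrades to `h·Y = 0` q.s., so the support `D` lies in the closed
hyperplane `h^⊥`; hence so does `Aff(D) ∋ h`, and `⟪h, h⟫ = 0`. -/

open MeasureTheory Set
open scoped ENNReal

theorem eq_zero_of_mem_affineSpan_of_inner_eq_zero {E : Type*} [NormedAddCommGroup E]
    [InnerProductSpace ℝ E] {s : Set E} {h : E} (hh : h ∈ affineSpan ℝ s)
    (hs : ∀ x ∈ s, inner ℝ h x = (0 : ℝ)) : h = 0 := by
  have hle : affineSpan ℝ s ≤ (LinearMap.ker (innerₛₗ ℝ h)).toAffineSubspace :=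
    affineSpan_le.2 hs
  exact inner_self_eq_zero.mp (hle hh)

theorem qsSupport_subset_of_ae_mem {Ω : Type*} [MeasurableSpace Ω] {d : ℕ}
    {𝒬 : Set (Measure Ω)} (h𝒬prob : ∀ P ∈ 𝒬, IsProbabilityMeasure P)
    {Y : Ω → EuclideanSpace ℝ (Fin d)} {A : Set (EuclideanSpace ℝ (Fin d))}
    (hA : IsClosed A) (hYA : ∀ P ∈ 𝒬, ∀ᵐ ω ∂P, Y ω ∈ A) : qsSupport 𝒬 Y ⊆ A := by
  refine sInter_subset_of_mem ⟨hA, fun P hP => ?_⟩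
  have := h𝒬prob P hP
  rw [measure_congr (ae_eq_univ (s := Y ⁻¹' A) |>.2 (ae_iff.1 (hYA P hP))), measure_univ]

theorem eq_zero_of_mem_affineSpan_of_nonneg_general
    {Ω : Type*} [MeasurableSpace Ω] {d : ℕ}
    (𝒬 : Set (Measure Ω))
    (h𝒬prob : ∀ P ∈ 𝒬, IsProbabilityMeasure P)
    (Y : Ω → EuclideanSpace ℝ (Fin d))
    (hNA : NAcond 𝒬 Y) :
    ∀ h : EuclideanSpace ℝ (Fin d),
      h ∈ affineSpan ℝ (qsSupport 𝒬 Y) →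
      (∀ P ∈ 𝒬, ∀ᵐ ω ∂P, 0 ≤ (inner ℝ h (Y ω) : ℝ)) →
      h = 0 := by
  intro h hmem hpos
  have hD : qsSupport 𝒬 Y ⊆ {x | inner ℝ h x = (0 : ℝ)} :=
    qsSupport_subset_of_ae_mem h𝒬prob (isClosed_eq (innerSL ℝ h).continuous continuous_const)
      (hNA h hpos)
  exact eq_zero_of_mem_affineSpan_of_inner_eq_zero hmem hD

/-- Under NA(𝒬), any `h ∈ Aff(D)` with `h·Y ≥ 0` 𝒬-q.s. must vanish. -/
theorem eq_zero_of_mem_affineSpan_of_nonneg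
    {Ω : Type*} [MeasurableSpace Ω] {d : ℕ}
    (𝒬 : Set (Measure Ω)) (h𝒬ne : 𝒬.Nonempty)
    (h𝒬prob : ∀ P ∈ 𝒬, IsProbabilityMeasure P)
    (h𝒬conv : ConvexMeasSet 𝒬)
    (Y : Ω → EuclideanSpace ℝ (Fin d)) (hY : Measurable Y)
    (hNA : NAcond 𝒬 Y) :
    ∀ h : EuclideanSpace ℝ (Fin d),
      h ∈ affineSpan ℝ (qsSupport 𝒬 Y) →
      (∀ P ∈ 𝒬, ∀ᵐ ω ∂P, 0 ≤ (inner ℝ h (Y ω) : ℝ)) →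
      h = 0 :=
  eq_zero_of_mem_affineSpan_of_nonneg_general 𝒬 h𝒬prob Y hNA
end

section
/- Let (Ω̄, 𝒢) be a measurable space, 𝒬 a nonempty set of probability measures on (Ω̄, 𝒢), and Y : Ω̄ → ℝ^d a 𝒢-measurable random variable. Suppose that for every integer n ≥ 1 there exists h_n ∈ Aff(D) with |h_n| = 1 such that P(h_n·Y < −1/n) < 1/n for every P ∈ 𝒬. Then there exists h* ∈ Aff(D) with |h*| = 1 such that h*·Y ≥ 0 P-almost surely for every P ∈ 𝒬. -/
/-!
The unit vectors `h_n` lie in the compact set `Aff(D) ∩ S^{d-1}`, so a subsequence converges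
to some unit `h* ∈ Aff(D)`. If `h*·Y(ω) < 0`, then `h_n·Y(ω) < -1/n` for all large `n` along the
subsequence, so `{h*·Y < 0}` is covered by the sets `⋂_{n ≥ N} {h_n·Y < -1/n}`, each of which has
`P`-measure at most `1/n` for every `n ≥ N`, hence measure zero.
-/

open MeasureTheory Set Filter Topology
open scoped ENNReal

section

variable {Ω : Type*} [MeasurableSpace Ω] (μ : Measure Ω)

theorem measure_eq_zero_of_eventually_mem {S : Set Ω} {B : ℕ → Set Ω}
    (hS : ∀ ω ∈ S, ∀ᶠ n in atTop, ω ∈ B n) (hB : Tendsto (fun n ↦ μ (B n)) atTop (𝓝 0)) :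
    μ S = 0 := by
  have hcover : S ⊆ ⋃ N, {ω | ∀ n ≥ N, ω ∈ B n} := fun ω hω ↦
    mem_iUnion.2 (eventually_atTop.1 (hS ω hω))
  have hnull : ∀ N, μ {ω | ∀ n ≥ N, ω ∈ B n} = 0 := fun N ↦
    nonpos_iff_eq_zero.1 <| ge_of_tendsto hB <| eventually_atTop.2
      ⟨N, fun n hn ↦ measure_mono fun ω hω ↦ hω n hn⟩
  exact measure_mono_null hcover (measure_iUnion_null hnull)

theorem ae_nonneg_inner_of_tendsto {E : Type*} [NormedAddCommGroup E] [InnerProductSpace ℝ E]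
    {Y : Ω → E} {g : ℕ → E} {h : E} {ε : ℕ → ℝ} (hg : Tendsto g atTop (𝓝 h))
    (hε : Tendsto ε atTop (𝓝 0))
    (hμ : Tendsto (fun n ↦ μ {ω | inner ℝ (g n) (Y ω) < -ε n}) atTop (𝓝 0)) :
    ∀ᵐ ω ∂μ, 0 ≤ inner ℝ h (Y ω) := by
  refine ae_iff.2 (measure_eq_zero_of_eventually_mem μ (fun ω hω ↦ ?_) hμ)
  have hlim : Tendsto (fun n ↦ inner ℝ (g n) (Y ω) + ε n) atTop (𝓝 (inner ℝ h (Y ω) + 0)) :=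
    (hg.inner tendsto_const_nhds).add hε
  filter_upwards [hlim.eventually_lt_const (by simpa using not_le.1 hω)] with n hn
  show inner ℝ (g n) (Y ω) < -ε n
  linarith

end

theorem exists_unit_vector_nonneg_qs_general
    {Ω : Type*} [MeasurableSpace Ω] {d : ℕ}
    (𝒬 : Set (Measure Ω))
    (Y : Ω → EuclideanSpace ℝ (Fin d))
    (hseq : ∀ n : ℕ, 1 ≤ n →
      ∃ h : EuclideanSpace ℝ (Fin d),
        h ∈ affineSpan ℝ (qsSupport 𝒬 Y) ∧ ‖h‖ = 1 ∧
        ∀ P ∈ 𝒬, P {ω | (inner ℝ h (Y ω) : ℝ) < -(1 / n)} < ENNReal.ofReal (1 / n)) :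
    ∃ hstar : EuclideanSpace ℝ (Fin d),
      hstar ∈ affineSpan ℝ (qsSupport 𝒬 Y) ∧ ‖hstar‖ = 1 ∧
      ∀ P ∈ 𝒬, ∀ᵐ ω ∂P, 0 ≤ (inner ℝ hstar (Y ω) : ℝ) := by
  set K := (affineSpan ℝ (qsSupport 𝒬 Y) : Set (EuclideanSpace ℝ (Fin d))) ∩ Metric.sphere 0 1
  have hK : IsCompact K :=
    (isCompact_sphere _ _).inter_left (AffineSubspace.closed_of_finiteDimensional _)
  choose g hg_span hg_norm hg_bad using fun n : ℕ ↦ hseq (n + 1) n.succ_pos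
  obtain ⟨hstar, ⟨hstar_span, hstar_norm⟩, φ, hφ, hlim⟩ :=
    hK.tendsto_subseq (x := g) fun n ↦ ⟨hg_span n, mem_sphere_zero_iff_norm.2 (hg_norm n)⟩
  refine ⟨hstar, hstar_span, mem_sphere_zero_iff_norm.1 hstar_norm, fun P hP ↦ ?_⟩
  have hε : Tendsto (fun k ↦ 1 / ((φ k + 1 : ℕ) : ℝ)) atTop (𝓝 0) := by
    push_cast
    exact tendsto_one_div_add_atTop_nhds_zero_nat.comp hφ.tendsto_atTop
  refine ae_nonneg_inner_of_tendsto P hlim hε ?_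
  have hbound : Tendsto (fun k ↦ ENNReal.ofReal (1 / ((φ k + 1 : ℕ) : ℝ))) atTop (𝓝 0) :=
    ENNReal.ofReal_zero ▸ ENNReal.tendsto_ofReal hε
  exact tendsto_of_tendsto_of_tendsto_of_le_of_le tendsto_const_nhds hbound
    (fun _ ↦ zero_le) fun k ↦ (hg_bad (φ k) P hP).le

/-- If for every `n ≥ 1` there is a unit vector `h_n ∈ Aff(D)` with
`P(h_n·Y < -1/n) < 1/n` for all `P ∈ 𝒬`, then there is a unit vector
`h* ∈ Aff(D)` with `h*·Y ≥ 0` `P`-a.s. for all `P ∈ 𝒬`. -/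
theorem exists_unit_vector_nonneg_qs
    {Ω : Type*} [MeasurableSpace Ω] {d : ℕ}
    (𝒬 : Set (Measure Ω)) (h𝒬ne : 𝒬.Nonempty)
    (h𝒬prob : ∀ P ∈ 𝒬, IsProbabilityMeasure P)
    (Y : Ω → EuclideanSpace ℝ (Fin d)) (hY : Measurable Y)
    (hseq : ∀ n : ℕ, 1 ≤ n →
      ∃ h : EuclideanSpace ℝ (Fin d),
        h ∈ affineSpan ℝ (qsSupport 𝒬 Y) ∧ ‖h‖ = 1 ∧
        ∀ P ∈ 𝒬, P {ω | (inner ℝ h (Y ω) : ℝ) < -(1 / n)} < ENNReal.ofReal (1 / n)) :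
    ∃ hstar : EuclideanSpace ℝ (Fin d),
      hstar ∈ affineSpan ℝ (qsSupport 𝒬 Y) ∧ ‖hstar‖ = 1 ∧
      ∀ P ∈ 𝒬, ∀ᵐ ω ∂P, 0 ≤ (inner ℝ hstar (Y ω) : ℝ) :=
  exists_unit_vector_nonneg_qs_general 𝒬 Y hseq
end
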